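/- Let δ > 0 and define the doubled smoothed ramp loss L : ℝ → ℝ by L(u) = 0 for u ≤ −δ, L(u) = (1 + u/δ)² for −δ < u ≤ 0, L(u) = 2 − (1 − u/δ)² for 0 < u < δ, and L(u) = 2 for u ≥ δ; define sign(t) = 1 if t ≥ 0 and sign(t) = −1 if t < 0. Let (Ω, ℱ, P) be a probability space, 𝒳 a measurable space, X : Ω → 𝒳 measurable, A : Ω → {−1, 1} a random variable, Y : Ω → ℝ a random variable with 0 ≤ Y ≤ h almost surely for some h > 0, and Δ : Ω → {0, 1} a random variable. Let π : {−1,1} × 𝒳 → ℝ be measurable with η ≤ π(a, x) ≤ 1 for all (a, x) and some η > 0, such that for each a ∈ {−1, 1}, ω ↦ π(a, X(ω)) is a version of P(A = a ∣ σ(X)). Let S̃ : ℝ × 𝒳 × {−1,1} → ℝ be measurable with η_C ≤ S̃ ≤ 1 for some η_C > 0, and fix τ ∈ ℝ. For measurable f : 𝒳 → ℝ and c ≥ 0 set V²_L(f, c) = E[−(Δ·max(0, c(τ − Y) + 1)/S̃(Y, X, A)) · L(A·f(X))/π(A, X)], and for measurable d : 𝒳 → {−1, 1} and c ≥ 0 set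 V²(d, c) = E[−(Δ·max(0, c(τ − Y) + 1)/S̃(Y, X, A)) · 1{A = d(X)}/π(A, X)]. If a measurable f̃ : 𝒳 → ℝ and c̃ ≥ 0 satisfy V²_L(f̃, c̃) ≥ V²_L(f, c) for every measurable f : 𝒳 → ℝ and every c ≥ 0, then V²(sign∘f̃, c̃) ≥ V²(d, c) for every measurable d : 𝒳 → {−1, 1} and every c ≥ 0. -/

import Mathlib

/-!
Write `Z` for the weight `Δ·max(0, c̃(τ - Y) + 1)/(S̃ π)`. Since `L(-u) = 2 - L(u)` and
`A = ±1`, the surrogate value at `c̃` is, up to a constant, `-E[L(f(X)) W]` with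
`W = E[Z A | X]`. As `u ↦ L(u) w` is minimised by `u = δ` when `w < 0` and by `u = -δ` when
`w > 0`, a maximiser `f̃` must have `f̃(X) ≥ δ` where `W < 0` and `f̃(X) ≤ -δ` where `W > 0`
(a.s.), so `δ · sgn f̃` is a maximiser too. On `±δ`-valued rules `L(A δ d(X)) = 2·1{A = d(X)}`,
hence `2 V²(d, c) = V²_L(δ d, c) ≤ V²_L(f̃, c̃) ≤ V²_L(δ sgn f̃, c̃) = 2 V²(sgn f̃, c̃)`.
-/

open MeasureTheory

noncomputable def rampL (δ u : ℝ) : ℝ :=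
  if u ≤ -δ then 0
  else if u ≤ 0 then (1 + u / δ) ^ 2
  else if u < δ then 2 - (1 - u / δ) ^ 2
  else 2

noncomputable def sgn (t : ℝ) : ℝ := if 0 ≤ t then 1 else -1

/-- The surrogate value `V²_L(f, c)`. -/
noncomputable def VLbuf {Ω 𝒳 : Type*} [MeasurableSpace Ω] [MeasurableSpace 𝒳]
    (P : Measure Ω) (X : Ω → 𝒳) (A Y Δc : Ω → ℝ) (S : ℝ × 𝒳 × ℝ → ℝ) (π : ℝ × 𝒳 → ℝ)
    (τ δ : ℝ) (f : 𝒳 → ℝ) (c : ℝ) : ℝ :=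
  ∫ ω, -(Δc ω * max 0 (c * (τ - Y ω) + 1) / S (Y ω, X ω, A ω))
      * rampL δ (A ω * f (X ω)) / π (A ω, X ω) ∂P

/-- The buffered-criterion value `V²(d, c)`. -/
noncomputable def Vbuf {Ω 𝒳 : Type*} [MeasurableSpace Ω] [MeasurableSpace 𝒳]
    (P : Measure Ω) (X : Ω → 𝒳) (A Y Δc : Ω → ℝ) (S : ℝ × 𝒳 × ℝ → ℝ) (π : ℝ × 𝒳 → ℝ)
    (τ : ℝ) (d : 𝒳 → ℝ) (c : ℝ) : ℝ :=
  ∫ ω, -(Δc ω * max 0 (c * (τ - Y ω) + 1) / S (Y ω, X ω, A ω))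
      * (if A ω = d (X ω) then (1 : ℝ) else 0) / π (A ω, X ω) ∂P

section RampLoss

variable {δ : ℝ}

lemma rampL_of_le {u : ℝ} (h : u ≤ -δ) : rampL δ u = 0 := if_pos h

lemma rampL_of_ge (hδ : 0 < δ) {u : ℝ} (h : δ ≤ u) : rampL δ u = 2 := by
  rw [rampL, if_neg (by linarith), if_neg (by linarith), if_neg (by linarith)]

lemma rampL_nonneg (hδ : 0 < δ) (u : ℝ) : 0 ≤ rampL δ u := by
  unfold rampL
  split_ifs with h₁ h₂ h₃
  · rfl
  · positivity
  · have : u / δ < 1 := (div_lt_one hδ).2 h₃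
    have : 0 < u / δ := div_pos (not_le.1 h₂) hδ
    nlinarith
  · norm_num

lemma rampL_add_neg (hδ : 0 < δ) (u : ℝ) : rampL δ u + rampL δ (-u) = 2 := by
  unfold rampL
  split_ifs <;> first | linarith | ring1 | (obtain rfl : u = 0 := by linarith); norm_num

lemma rampL_neg (hδ : 0 < δ) (u : ℝ) : rampL δ (-u) = 2 - rampL δ u := by
  linarith [rampL_add_neg hδ u]

lemma rampL_le_two (hδ : 0 < δ) (u : ℝ) : rampL δ u ≤ 2 := by
  linarith [rampL_neg hδ u, rampL_nonneg hδ (-u)]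

lemma rampL_pos (hδ : 0 < δ) {u : ℝ} (h : -δ < u) : 0 < rampL δ u := by
  unfold rampL
  split_ifs with h₁ h₂ h₃
  · exact absurd h₁ (not_le.2 h)
  · have : 0 < 1 + u / δ := by
      have : -1 < u / δ := by rw [lt_div_iff₀ hδ]; linarith
      linarith
    positivity
  · have : u / δ < 1 := (div_lt_one hδ).2 h₃
    have : 0 < u / δ := div_pos (not_le.1 h₂) hδ
    nlinarith
  · norm_num

lemma rampL_lt_two (hδ : 0 < δ) {u : ℝ} (h : u < δ) : rampL δ u < 2 := by
  linarith [rampL_pos hδ (neg_lt_neg h), rampL_neg hδ u]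

lemma measurable_rampL : Measurable (rampL δ) := by
  unfold rampL
  exact Measurable.ite measurableSet_Iic measurable_const <|
    Measurable.ite measurableSet_Iic (by fun_prop) <|
      Measurable.ite measurableSet_Iio (by fun_prop) measurable_const

lemma rampL_sign_mul (hδ : 0 < δ) {a : ℝ} (ha : a = 1 ∨ a = -1) (u : ℝ) :
    rampL δ (a * u) = a * rampL δ u + (1 - a) := by
  rcases ha with rfl | rfl
  · rw [one_mul]; ring
  · rw [neg_one_mul, rampL_neg hδ]; ring

lemma rampL_mul_delta_mul (hδ : 0 < δ) {a e : ℝ} (ha : a = 1 ∨ a = -1) (he : e = 1 ∨ e = -1) :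
    rampL δ (a * (δ * e)) = 2 * if a = e then 1 else 0 := by
  rcases ha with rfl | rfl <;> rcases he with rfl | rfl <;> norm_num
  · exact rampL_of_ge hδ le_rfl
  · exact rampL_of_le le_rfl
  · exact rampL_of_le le_rfl
  · exact rampL_of_ge hδ le_rfl

lemma rampL_minimizer_mul_le (hδ : 0 < δ) (w u : ℝ) :
    rampL δ (if w < 0 then δ else -δ) * w ≤ rampL δ u * w := by
  split_ifs with hw
  · rw [rampL_of_ge hδ le_rfl]
    nlinarith [rampL_le_two hδ u]
  · rw [rampL_of_le le_rfl, zero_mul]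
    exact mul_nonneg (rampL_nonneg hδ u) (not_lt.1 hw)

lemma rampL_delta_mul_sgn_mul_le (hδ : 0 < δ) {w u : ℝ}
    (h : rampL δ u * w ≤ rampL δ (if w < 0 then δ else -δ) * w) :
    rampL δ (δ * sgn u) * w ≤ rampL δ u * w := by
  rcases lt_trichotomy w 0 with hw | rfl | hw
  · rw [if_pos hw, rampL_of_ge hδ le_rfl] at h
    have hu : δ ≤ u := not_lt.1 fun hu => by nlinarith [rampL_lt_two hδ hu]
    rw [sgn, if_pos (hδ.le.trans hu), mul_one, rampL_of_ge hδ le_rfl, rampL_of_ge hδ hu]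
  · simp
  · rw [if_neg hw.not_gt, rampL_of_le le_rfl] at h
    have hu : u ≤ -δ := not_lt.1 fun hu => by nlinarith [rampL_pos hδ hu]
    rw [sgn, if_neg (by linarith), mul_neg_one, rampL_of_le le_rfl, rampL_of_le hu]

end RampLoss

lemma sgn_eq_one_or_neg_one (t : ℝ) : sgn t = 1 ∨ sgn t = -1 := by
  unfold sgn; split_ifs <;> simp

lemma measurable_sgn : Measurable sgn :=
  Measurable.ite measurableSet_Ici measurable_const measurable_const

section FisherConsistency

variable {Ω 𝒳 : Type*} {m₀ : MeasurableSpace Ω} [m𝒳 : MeasurableSpace 𝒳] {μ : Measure Ω}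
  {δ : ℝ}

lemma integral_mul_condExp_of_bound [IsFiniteMeasure μ] {m : MeasurableSpace Ω} (hm : m ≤ m₀)
    {θ G : Ω → ℝ} (hθ : StronglyMeasurable[m] θ) {C : ℝ} (hθC : ∀ ω, ‖θ ω‖ ≤ C)
    (hG : Integrable G μ) :
    ∫ ω, θ ω * G ω ∂μ = ∫ ω, θ ω * μ[G | m] ω ∂μ :=
  calc ∫ ω, θ ω * G ω ∂μ = ∫ ω, μ[θ * G | m] ω ∂μ := (integral_condExp hm).symm
    _ = ∫ ω, θ ω * μ[G | m] ω ∂μ :=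
      integral_congr_ae (condExp_stronglyMeasurable_mul_of_bound hm hθ hG C (.of_forall hθC))

lemma norm_rampL_le (hδ : 0 < δ) (u : ℝ) : ‖rampL δ u‖ ≤ 2 := by
  rw [Real.norm_eq_abs, abs_of_nonneg (rampL_nonneg hδ u)]
  exact rampL_le_two hδ u

lemma MeasureTheory.Integrable.rampL_mul (hδ : 0 < δ) {φ W : Ω → ℝ} (hφ : Measurable φ)
    (hW : Integrable W μ) : Integrable (fun ω => rampL δ (φ ω) * W ω) μ :=
  hW.bdd_mul (measurable_rampL.comp hφ).aestronglyMeasurable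
    (.of_forall fun ω => norm_rampL_le hδ (φ ω))

lemma integral_rampL_delta_mul_sgn_mul_le (hδ : 0 < δ) {X : Ω → 𝒳} (hX : Measurable X)
    {W : Ω → ℝ} (hW : Measurable[m𝒳.comap X] W) (hWi : Integrable W μ) {f₀ : 𝒳 → ℝ}
    (hf₀ : Measurable f₀)
    (hmin : ∀ f : 𝒳 → ℝ, Measurable f →
      ∫ ω, rampL δ (f₀ (X ω)) * W ω ∂μ ≤ ∫ ω, rampL δ (f (X ω)) * W ω ∂μ) :
    ∫ ω, rampL δ (δ * sgn (f₀ (X ω))) * W ω ∂μ ≤ ∫ ω, rampL δ (f₀ (X ω)) * W ω ∂μ := by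
  classical
  obtain ⟨E, hE, hEW⟩ := hW measurableSet_Iio
  set g : 𝒳 → ℝ := fun x => if x ∈ E then δ else -δ
  have hg : Measurable g := Measurable.ite hE measurable_const measurable_const
  have hgX : ∀ ω, g (X ω) = if W ω < 0 then δ else -δ := fun ω => by
    simp only [g, ← Set.mem_preimage, hEW]
    rfl
  have hint : ∀ f : 𝒳 → ℝ, Measurable f → Integrable (fun ω => rampL δ (f (X ω)) * W ω) μ :=
    fun f hf => hWi.rampL_mul hδ (hf.comp hX)
  -- `g ∘ X` minimises `L(·) W` pointwise, so the optimality of `f₀` forces equality a.e.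
  have hle : ∀ ω, rampL δ (g (X ω)) * W ω ≤ rampL δ (f₀ (X ω)) * W ω := fun ω => by
    rw [hgX]
    exact rampL_minimizer_mul_le hδ _ _
  have heq : (fun ω => rampL δ (g (X ω)) * W ω) =ᵐ[μ] fun ω => rampL δ (f₀ (X ω)) * W ω :=
    (integral_eq_iff_of_ae_le (hint g hg) (hint f₀ hf₀) (.of_forall hle)).1
      ((integral_mono (hint g hg) (hint f₀ hf₀) hle).antisymm (hmin g hg))
  refine integral_mono_ae (hint _ ((measurable_sgn.comp hf₀).const_mul δ)) (hint f₀ hf₀) ?_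
  filter_upwards [heq] with ω hω
  exact rampL_delta_mul_sgn_mul_le hδ (by rw [← hgX]; exact hω.ge)

lemma integral_mul_rampL_mul_eq [IsFiniteMeasure μ] (hδ : 0 < δ) {X : Ω → 𝒳}
    (hX : Measurable X) {A : Ω → ℝ} (hA : Measurable A) (hAval : ∀ ω, A ω = 1 ∨ A ω = -1)
    {Z : Ω → ℝ} (hZ : Integrable Z μ) {f : 𝒳 → ℝ} (hf : Measurable f) :
    ∫ ω, Z ω * rampL δ (A ω * f (X ω)) ∂μ
      = ∫ ω, rampL δ (f (X ω)) * μ[Z * A | m𝒳.comap X] ω ∂μ + ∫ ω, Z ω * (1 - A ω) ∂μ := by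
  have hA_le : ∀ ω, ‖A ω‖ ≤ 1 := fun ω => by rcases hAval ω with h | h <;> simp [h]
  have hZA : Integrable (Z * A) μ := hZ.mul_bdd hA.aestronglyMeasurable (.of_forall hA_le)
  have hθ : StronglyMeasurable[m𝒳.comap X] fun ω => rampL δ (f (X ω)) :=
    ((measurable_rampL.comp hf).comp (comap_measurable X)).stronglyMeasurable
  rw [← integral_mul_condExp_of_bound hX.comap_le hθ (fun ω => norm_rampL_le hδ _) hZA,
    ← integral_add (hZA.rampL_mul hδ (φ := fun ω => f (X ω)) (hf.comp hX))
      (hZ.mul_bdd (hA.const_sub 1).aestronglyMeasurable (c := 2) (.of_forall fun ω => by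
        rcases hAval ω with h | h <;> norm_num [h]))]
  refine integral_congr_ae (.of_forall fun ω => ?_)
  simp only [Pi.mul_apply]
  rw [rampL_sign_mul hδ (hAval ω)]
  ring

theorem integral_mul_rampL_delta_mul_sgn_le [IsFiniteMeasure μ] (hδ : 0 < δ) {X : Ω → 𝒳}
    (hX : Measurable X) {A : Ω → ℝ} (hA : Measurable A) (hAval : ∀ ω, A ω = 1 ∨ A ω = -1)
    {Z : Ω → ℝ} (hZ : Integrable Z μ) {f₀ : 𝒳 → ℝ} (hf₀ : Measurable f₀)
    (hmin : ∀ f : 𝒳 → ℝ, Measurable f →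
      ∫ ω, Z ω * rampL δ (A ω * f₀ (X ω)) ∂μ ≤ ∫ ω, Z ω * rampL δ (A ω * f (X ω)) ∂μ) :
    ∫ ω, Z ω * rampL δ (A ω * (δ * sgn (f₀ (X ω)))) ∂μ
      ≤ ∫ ω, Z ω * rampL δ (A ω * f₀ (X ω)) ∂μ := by
  have hdecomp := fun f (hf : Measurable f) => integral_mul_rampL_mul_eq hδ hX hA hAval hZ hf
  have hW := integral_rampL_delta_mul_sgn_mul_le hδ hX
    stronglyMeasurable_condExp.measurable integrable_condExp hf₀ fun f hf => by
      have := hmin f hf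
      rw [hdecomp f hf, hdecomp f₀ hf₀] at this
      linarith
  rw [hdecomp (fun x => δ * sgn (f₀ x)) ((measurable_sgn.comp hf₀).const_mul δ),
    hdecomp f₀ hf₀]
  linarith

end FisherConsistency

section BufferedCriterion

variable {Ω 𝒳 : Type*} [MeasurableSpace Ω] [MeasurableSpace 𝒳]

noncomputable def bufWeight (X : Ω → 𝒳) (A Y Δc : Ω → ℝ) (S : ℝ × 𝒳 × ℝ → ℝ)
    (π : ℝ × 𝒳 → ℝ) (τ c : ℝ) (ω : Ω) : ℝ :=
  Δc ω * max 0 (c * (τ - Y ω) + 1) / S (Y ω, X ω, A ω) / π (A ω, X ω)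

variable {P : Measure Ω} {X : Ω → 𝒳} {A Y Δc : Ω → ℝ} {S : ℝ × 𝒳 × ℝ → ℝ} {π : ℝ × 𝒳 → ℝ}
  {τ δ : ℝ}

lemma VLbuf_eq_neg_integral (f : 𝒳 → ℝ) (c : ℝ) :
    VLbuf P X A Y Δc S π τ δ f c
      = -∫ ω, bufWeight X A Y Δc S π τ c ω * rampL δ (A ω * f (X ω)) ∂P := by
  rw [VLbuf, ← integral_neg]
  congr 1
  funext ω
  rw [bufWeight]
  ring

lemma VLbuf_delta_mul (hδ : 0 < δ) (hAval : ∀ ω, A ω = 1 ∨ A ω = -1) {e : 𝒳 → ℝ}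
    (he : ∀ x, e x = 1 ∨ e x = -1) (c : ℝ) :
    VLbuf P X A Y Δc S π τ δ (fun x => δ * e x) c = 2 * Vbuf P X A Y Δc S π τ e c := by
  rw [VLbuf, Vbuf, ← integral_const_mul]
  congr 1
  funext ω
  rw [rampL_mul_delta_mul hδ (hAval ω) (he (X ω))]
  ring

lemma integrable_bufWeight [IsFiniteMeasure P] (hX : Measurable X) (hA : Measurable A)
    (hY : Measurable Y) (hY₀ : ∀ᵐ ω ∂P, 0 ≤ Y ω) (hΔm : Measurable Δc)
    (hΔval : ∀ ω, Δc ω = 0 ∨ Δc ω = 1) (hπ : Measurable π) {η : ℝ} (hη : 0 < η)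
    (hπb : ∀ a x, η ≤ π (a, x) ∧ π (a, x) ≤ 1) (hS : Measurable S) {ηC : ℝ} (hηC : 0 < ηC)
    (hSb : ∀ t x a, ηC ≤ S (t, x, a) ∧ S (t, x, a) ≤ 1) {c : ℝ} (hc : 0 ≤ c) :
    Integrable (bufWeight X A Y Δc S π τ c) P := by
  have hmeas : Measurable (bufWeight X A Y Δc S π τ c) := by
    unfold bufWeight
    fun_prop
  refine .of_bound hmeas.aestronglyMeasurable ((c * |τ| + 1) / ηC / η) ?_
  filter_upwards [hY₀] with ω hω
  have hΔ : 0 ≤ Δc ω ∧ Δc ω ≤ 1 := by rcases hΔval ω with h | h <;> norm_num [h]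
  have hmax : max 0 (c * (τ - Y ω) + 1) ≤ c * |τ| + 1 :=
    max_le (by positivity) (by nlinarith [le_abs_self τ])
  obtain ⟨hS₁, -⟩ := hSb (Y ω) (X ω) (A ω)
  obtain ⟨hπ₁, -⟩ := hπb (A ω) (X ω)
  have hw : 0 ≤ bufWeight X A Y Δc S π τ c ω :=
    div_nonneg (div_nonneg (mul_nonneg hΔ.1 (le_max_left _ _)) (hηC.trans_le hS₁).le)
      (hη.trans_le hπ₁).le
  rw [Real.norm_eq_abs, abs_of_nonneg hw, bufWeight]
  gcongr ?_ / ?_ / ?_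
  calc Δc ω * max 0 (c * (τ - Y ω) + 1) ≤ 1 * (c * |τ| + 1) := by gcongr; exact hΔ.2
    _ = c * |τ| + 1 := one_mul _

end BufferedCriterion

theorem stmt_9_general {Ω 𝒳 : Type*} [MeasurableSpace Ω] [MeasurableSpace 𝒳]
    (P : Measure Ω) [IsProbabilityMeasure P]
    (X : Ω → 𝒳) (hX : Measurable X)
    (A : Ω → ℝ) (hA : Measurable A) (hAval : ∀ ω, A ω = 1 ∨ A ω = -1)
    (Y : Ω → ℝ) (hY : Measurable Y)
    (h : ℝ) (hYb : ∀ᵐ ω ∂P, 0 ≤ Y ω ∧ Y ω ≤ h)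
    (Δc : Ω → ℝ) (hΔm : Measurable Δc) (hΔval : ∀ ω, Δc ω = 0 ∨ Δc ω = 1)
    (π : ℝ × 𝒳 → ℝ) (hπ : Measurable π) (η : ℝ) (hη : 0 < η)
    (hπb : ∀ a x, η ≤ π (a, x) ∧ π (a, x) ≤ 1)
    (S : ℝ × 𝒳 × ℝ → ℝ) (hS : Measurable S) (ηC : ℝ) (hηC : 0 < ηC)
    (hSb : ∀ t x a, ηC ≤ S (t, x, a) ∧ S (t, x, a) ≤ 1)
    (τ : ℝ) (δ : ℝ) (hδ : 0 < δ)
    (ftilde : 𝒳 → ℝ) (hftilde : Measurable ftilde) (ctilde : ℝ) (hctilde : 0 ≤ ctilde)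
    (hopt : ∀ f : 𝒳 → ℝ, Measurable f → ∀ c : ℝ, 0 ≤ c →
      VLbuf P X A Y Δc S π τ δ f c ≤ VLbuf P X A Y Δc S π τ δ ftilde ctilde) :
    ∀ d : 𝒳 → ℝ, Measurable d → (∀ x, d x = 1 ∨ d x = -1) → ∀ c : ℝ, 0 ≤ c →
      Vbuf P X A Y Δc S π τ d c
        ≤ Vbuf P X A Y Δc S π τ (fun x => sgn (ftilde x)) ctilde := by
  intro d hd hdval c hc
  have hZ := integrable_bufWeight (τ := τ) hX hA hY (hYb.mono fun _ hω => hω.1) hΔm hΔval hπ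
    hη hπb hS hηC hSb hctilde
  have hsgn : VLbuf P X A Y Δc S π τ δ ftilde ctilde
      ≤ VLbuf P X A Y Δc S π τ δ (fun x => δ * sgn (ftilde x)) ctilde := by
    simp only [VLbuf_eq_neg_integral, neg_le_neg_iff]
    exact integral_mul_rampL_delta_mul_sgn_le hδ hX hA hAval hZ hftilde fun f hf => by
      simpa only [VLbuf_eq_neg_integral, neg_le_neg_iff] using hopt f hf ctilde hctilde
  have hd_le := hopt (fun x => δ * d x) (hd.const_mul δ) c hc
  rw [VLbuf_delta_mul hδ hAval hdval] at hd_le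
  rw [VLbuf_delta_mul hδ hAval fun x => sgn_eq_one_or_neg_one (ftilde x)] at hsgn
  linarith

/-- Theorem 4 of the paper: Fisher consistency of the surrogate loss for the
buffered criterion. If `(f̃, c̃)` with `c̃ ≥ 0` maximizes the surrogate value `V²_L` over
measurable `f` and `c ≥ 0`, then `(sign ∘ f̃, c̃)` maximizes `V²` over measurable rules
`d : 𝒳 → {-1,1}` and `c ≥ 0`. -/
theorem stmt_9 {Ω 𝒳 : Type*} [MeasurableSpace Ω] [MeasurableSpace 𝒳]
    (P : Measure Ω) [IsProbabilityMeasure P]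
    (X : Ω → 𝒳) (hX : Measurable X)
    (A : Ω → ℝ) (hA : Measurable A) (hAval : ∀ ω, A ω = 1 ∨ A ω = -1)
    (Y : Ω → ℝ) (hY : Measurable Y)
    (h : ℝ) (hh : 0 < h) (hYb : ∀ᵐ ω ∂P, 0 ≤ Y ω ∧ Y ω ≤ h)
    (Δc : Ω → ℝ) (hΔm : Measurable Δc) (hΔval : ∀ ω, Δc ω = 0 ∨ Δc ω = 1)
    (π : ℝ × 𝒳 → ℝ) (hπ : Measurable π) (η : ℝ) (hη : 0 < η)
    (hπb : ∀ a x, η ≤ π (a, x) ∧ π (a, x) ≤ 1)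
    (hπver : ∀ a : ℝ, (a = 1 ∨ a = -1) →
      (fun ω => π (a, X ω)) =ᵐ[P]
        P[fun ω => if A ω = a then (1 : ℝ) else 0 |
          MeasurableSpace.comap X inferInstance])
    (S : ℝ × 𝒳 × ℝ → ℝ) (hS : Measurable S) (ηC : ℝ) (hηC : 0 < ηC)
    (hSb : ∀ t x a, ηC ≤ S (t, x, a) ∧ S (t, x, a) ≤ 1)
    (τ : ℝ) (δ : ℝ) (hδ : 0 < δ)
    (ftilde : 𝒳 → ℝ) (hftilde : Measurable ftilde) (ctilde : ℝ) (hctilde : 0 ≤ ctilde)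
    (hopt : ∀ f : 𝒳 → ℝ, Measurable f → ∀ c : ℝ, 0 ≤ c →
      VLbuf P X A Y Δc S π τ δ f c ≤ VLbuf P X A Y Δc S π τ δ ftilde ctilde) :
    ∀ d : 𝒳 → ℝ, Measurable d → (∀ x, d x = 1 ∨ d x = -1) → ∀ c : ℝ, 0 ≤ c →
      Vbuf P X A Y Δc S π τ d c
        ≤ Vbuf P X A Y Δc S π τ (fun x => sgn (ftilde x)) ctilde :=
  stmt_9_general P X hX A hA hAval Y hY h hYb Δc hΔm hΔval π hπ η hη hπb S hS ηC hηC hSb τ δ hδ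
    ftilde hftilde ctilde hctilde hopt
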